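/- Let n = 5. There is a constant C such that for any radial u ∈ C_0^∞(ℝ⁵), sup_{x ∈ ℝ⁵} |x|^{1/2} ⟨|x|⟩^{3/2} |u(x)| ≤ C Σ_{|a| ≤ 2} ‖∇^a u‖_{L²(ℝ⁵)}. -/

import Mathlib

open MeasureTheory Set Metric intervalIntegral
open scoped NNReal ENNReal
noncomputable section

/-- Cauchy–Schwarz for interval integrals of continuous functions. -/
lemma cs_interval {f g : ℝ → ℝ} (hf : Continuous f) (hg : Continuous g)
    {a b : ℝ} (hab : a ≤ b) :
    ∫ s in a..b, f s * g s ≤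
      Real.sqrt (∫ s in a..b, f s ^ 2) * Real.sqrt (∫ s in a..b, g s ^ 2) := by
  have h2 : Real.HolderConjugate 2 2 := Real.HolderConjugate.two_two
  have hfin : IsFiniteMeasure (volume.restrict (Ioc a b)) := by
    constructor
    rw [Measure.restrict_apply_univ]
    exact (measure_Ioc_lt_top)
  have hmem : ∀ (h : ℝ → ℝ), Continuous h →
      MemLp h (ENNReal.ofReal 2) (volume.restrict (Ioc a b)) := by
    intro h hc
    obtain ⟨C, hC⟩ := (isCompact_Icc (a := a) (b := b)).exists_bound_of_continuousOn
      hc.continuousOn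
    exact MemLp.of_bound (hc.aestronglyMeasurable) C
      ((ae_restrict_iff' measurableSet_Ioc).2 (Filter.Eventually.of_forall
        fun s hs => hC s (Ioc_subset_Icc_self hs)))
  have key := integral_mul_le_Lp_mul_Lq_of_nonneg h2
    (μ := volume.restrict (Ioc a b)) (f := fun s => |f s|) (g := fun s => |g s|)
    (Filter.Eventually.of_forall fun s => abs_nonneg _)
    (Filter.Eventually.of_forall fun s => abs_nonneg _)
    (hmem _ hf.abs) (hmem _ hg.abs)
  have habs : ∀ h : ℝ → ℝ, (∫ s in Ioc a b, |h s| ^ (2:ℝ)) = ∫ s in Ioc a b, h s ^ 2 := by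
    intro h
    apply MeasureTheory.integral_congr_ae
    filter_upwards with s
    rw [show ((2:ℝ)) = ((2:ℕ):ℝ) by norm_num, Real.rpow_natCast, sq_abs]
  rw [intervalIntegral.integral_of_le hab, intervalIntegral.integral_of_le hab,
    intervalIntegral.integral_of_le hab]
  calc ∫ s in Ioc a b, f s * g s
      ≤ ∫ s in Ioc a b, |f s| * |g s| := by
        apply integral_mono ((hf.mul hg).integrableOn_Ioc)
          ((hf.abs.mul hg.abs).integrableOn_Ioc)
        intro s
        dsimp only [Pi.mul_apply]
        rw [← abs_mul]
        exact le_abs_self _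
    _ ≤ (∫ s in Ioc a b, |f s| ^ (2:ℝ)) ^ ((1:ℝ)/2) *
        (∫ s in Ioc a b, |g s| ^ (2:ℝ)) ^ ((1:ℝ)/2) := key
    _ = Real.sqrt (∫ s in Ioc a b, f s ^ 2) * Real.sqrt (∫ s in Ioc a b, g s ^ 2) := by
        rw [Real.sqrt_eq_rpow, Real.sqrt_eq_rpow, habs f, habs g]
abbrev E5 := EuclideanSpace ℝ (Fin 5)

variable {u : E5 → ℝ}

lemma dir_facts (hu : ContDiff ℝ (⊤ : ℕ∞) u) (hrad : ∃ w : ℝ → ℝ, ∀ x, u x = w ‖x‖) :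
    ∃ W : ℝ → ℝ, Continuous W ∧ Continuous (deriv W) ∧ Continuous (deriv (deriv W)) ∧
      (∀ r : ℝ, HasDerivAt W (deriv W r) r) ∧
      (∀ r : ℝ, HasDerivAt (deriv W) (deriv (deriv W) r) r) ∧
      (∀ x : E5, u x = W ‖x‖) ∧
      (∀ x : E5, |deriv W ‖x‖| ≤ ‖iteratedFDeriv ℝ 1 u x‖) ∧
      (∀ x : E5, |deriv (deriv W) ‖x‖| ≤ ‖iteratedFDeriv ℝ 2 u x‖) := by
  obtain ⟨w, hw⟩ := hrad
  set e₁ : E5 := EuclideanSpace.single 0 1 with he₁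
  have he : ‖e₁‖ = 1 := by simp [he₁, EuclideanSpace.norm_single]
  set W : ℝ → ℝ := fun r => u (r • e₁) with hW
  -- W is independent of the unit direction
  have hdirW : ∀ θ : E5, ‖θ‖ = 1 → ∀ r : ℝ, W r = u (r • θ) := by
    intro θ hθ r
    show u (r • e₁) = u (r • θ)
    rw [hw (r • e₁), hw (r • θ), norm_smul, norm_smul, he, hθ]
  -- first derivative along a direction
  have hud : Differentiable ℝ u := hu.differentiable (by simp)
  have hd1 : ∀ (θ : E5), ‖θ‖ = 1 → ∀ r : ℝ,
      HasDerivAt W (fderiv ℝ u (r • θ) θ) r := by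
    intro θ hθ r
    have hline : HasDerivAt (fun s : ℝ => s • θ) θ r := by
      simpa using (hasDerivAt_id r).smul_const θ
    have := (hud (r • θ)).hasFDerivAt.comp_hasDerivAt r hline
    refine HasDerivAt.congr_of_eventuallyEq this ?_
    filter_upwards with s
    exact (hdirW θ hθ s).symm ▸ rfl
  have hderivW : ∀ (θ : E5), ‖θ‖ = 1 → ∀ r : ℝ,
      deriv W r = fderiv ℝ u (r • θ) θ := fun θ hθ r => (hd1 θ hθ r).deriv
  -- fderiv u is C^∞
  have hfd : ContDiff ℝ (⊤ : ℕ∞) (fderiv ℝ u) := hu.fderiv_right (le_refl _)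
  have hfdd : Differentiable ℝ (fderiv ℝ u) := hfd.differentiable (by simp)
  have hd2 : ∀ (θ : E5), ‖θ‖ = 1 → ∀ r : ℝ,
      HasDerivAt (deriv W) (fderiv ℝ (fderiv ℝ u) (r • θ) θ θ) r := by
    intro θ hθ r
    have hline : HasDerivAt (fun s : ℝ => s • θ) θ r := by
      simpa using (hasDerivAt_id r).smul_const θ
    have happ : HasFDerivAt (fun y : E5 => fderiv ℝ u y θ)
        ((ContinuousLinearMap.apply ℝ ℝ θ).comp (fderiv ℝ (fderiv ℝ u) (r • θ))) (r • θ) :=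
      (ContinuousLinearMap.apply ℝ ℝ θ).hasFDerivAt.comp _ (hfdd _).hasFDerivAt
    have := happ.comp_hasDerivAt r hline
    refine HasDerivAt.congr_of_eventuallyEq (by simpa using this) ?_
    filter_upwards with s
    exact hderivW θ hθ s
  have hderiv2W : ∀ (θ : E5), ‖θ‖ = 1 → ∀ r : ℝ,
      deriv (deriv W) r = fderiv ℝ (fderiv ℝ u) (r • θ) θ θ :=
    fun θ hθ r => (hd2 θ hθ r).deriv
  -- a unit vector pointing to x, with r • θ = x where r = ‖x‖
  have hθx : ∀ x : E5, ∃ θ : E5, ‖θ‖ = 1 ∧ (‖x‖ : ℝ) • θ = x := by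
    intro x
    rcases eq_or_ne x 0 with h | h
    · exact ⟨e₁, he, by simp [h]⟩
    · refine ⟨‖x‖⁻¹ • x, ?_, ?_⟩
      · rw [norm_smul, norm_inv, norm_norm, inv_mul_cancel₀ (norm_ne_zero_iff.2 h)]
      · rw [smul_smul, mul_inv_cancel₀ (norm_ne_zero_iff.2 h), one_smul]
  refine ⟨W, ?_, ?_, ?_, ?_, ?_, ?_, ?_, ?_⟩
  · exact hu.continuous.comp ((continuous_id.smul continuous_const))
  · have : deriv W = fun r => fderiv ℝ u (r • e₁) e₁ := funext (hderivW e₁ he)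
    rw [this]
    exact (ContinuousLinearMap.apply ℝ ℝ e₁).continuous.comp
      ((hu.continuous_fderiv (by simp)).comp ((continuous_id.smul continuous_const)))
  · have : deriv (deriv W) = fun r => fderiv ℝ (fderiv ℝ u) (r • e₁) e₁ e₁ :=
      funext (hderiv2W e₁ he)
    rw [this]
    exact (ContinuousLinearMap.apply ℝ ℝ e₁).continuous.comp
      ((ContinuousLinearMap.apply ℝ (E5 →L[ℝ] ℝ) e₁).continuous.comp
        ((hfd.continuous_fderiv (by simp)).comp ((continuous_id.smul continuous_const))))
  · intro r
    rw [hderivW e₁ he r]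
    exact hd1 e₁ he r
  · intro r
    rw [hderiv2W e₁ he r]
    exact hd2 e₁ he r
  · intro x
    obtain ⟨θ, hθ, hx⟩ := hθx x
    rw [hdirW θ hθ ‖x‖, hx]
  · intro x
    obtain ⟨θ, hθ, hx⟩ := hθx x
    rw [hderivW θ hθ ‖x‖, hx]
    have h1 : fderiv ℝ u x θ = iteratedFDeriv ℝ 1 u x ![θ] := by
      rw [iteratedFDeriv_one_apply]
      simp
    calc |fderiv ℝ u x θ| = ‖iteratedFDeriv ℝ 1 u x ![θ]‖ := by rw [h1, Real.norm_eq_abs]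
      _ ≤ ‖iteratedFDeriv ℝ 1 u x‖ * ∏ i, ‖(![θ] : Fin 1 → E5) i‖ :=
          (iteratedFDeriv ℝ 1 u x).le_opNorm _
      _ = ‖iteratedFDeriv ℝ 1 u x‖ := by simp [hθ]
  · intro x
    obtain ⟨θ, hθ, hx⟩ := hθx x
    rw [hderiv2W θ hθ ‖x‖, hx]
    have h2 : fderiv ℝ (fderiv ℝ u) x θ θ = iteratedFDeriv ℝ 2 u x ![θ, θ] := by
      rw [iteratedFDeriv_two_apply]
      simp
    calc |fderiv ℝ (fderiv ℝ u) x θ θ| = ‖iteratedFDeriv ℝ 2 u x ![θ, θ]‖ := by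
          rw [h2, Real.norm_eq_abs]
      _ ≤ ‖iteratedFDeriv ℝ 2 u x‖ * ∏ i, ‖(![θ, θ] : Fin 2 → E5) i‖ :=
          (iteratedFDeriv ℝ 2 u x).le_opNorm _
      _ = ‖iteratedFDeriv ℝ 2 u x‖ := by simp [hθ, Fin.prod_univ_two]
lemma polar_bound {g : ℝ → ℝ} (hg : Continuous g) {G : E5 → ℝ} (hG : Continuous G)
    (hGc : HasCompactSupport G) {T : ℝ} (hT : 0 < T) (hvan : ∀ s, T ≤ s → g s = 0)
    (hcomp : ∀ x : E5, |g ‖x‖| ≤ |G x|) :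
    ∫ s in (0:ℝ)..T, g s ^ 2 * s ^ 4 ≤
      (5 * (volume (ball (0:E5) 1)).toReal)⁻¹ * ∫ x : E5, G x ^ 2 := by
  set v : ℝ := (volume (ball (0:E5) 1)).toReal with hv
  have hvpos : 0 < v := ENNReal.toReal_pos (measure_ball_pos volume 0 one_pos).ne'
    measure_ball_lt_top.ne
  have h5v : (0:ℝ) < 5 * v := by positivity
  -- the 1D integrand
  set h : ℝ → ℝ := fun s => s ^ 4 * g s ^ 2 with hh
  have hhc : Continuous h := by fun_prop
  -- interval integral to Ioi
  have hIoc : ∫ s in (0:ℝ)..T, g s ^ 2 * s ^ 4 = ∫ s in Ioi (0:ℝ), h s := by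
    rw [intervalIntegral.integral_of_le hT.le]
    have hunion : Ioc (0:ℝ) T ∪ Ioi T = Ioi 0 := Ioc_union_Ioi_eq_Ioi hT.le
    have hzero : EqOn h (fun _ => (0:ℝ)) (Ioi T) := by
      intro s hs
      simp [hh, hvan s (le_of_lt hs)]
    have hint1 : IntegrableOn h (Ioc 0 T) := hhc.integrableOn_Ioc
    have hint2 : IntegrableOn h (Ioi T) :=
      (integrableOn_congr_fun hzero measurableSet_Ioi).2 (integrableOn_zero)
    rw [← hunion, setIntegral_union (Ioc_disjoint_Ioi le_rfl) measurableSet_Ioi hint1 hint2,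
      setIntegral_congr_fun measurableSet_Ioi hzero]
    simp only [integral_zero, add_zero]
    apply setIntegral_congr_fun measurableSet_Ioc
    intro s _
    simp [hh]
    ring
  -- polar coordinates
  have hpolar := integral_fun_norm_addHaar (volume : Measure E5) (fun s => g s ^ 2)
  rw [finrank_euclideanSpace_fin] at hpolar
  -- hpolar : ∫ x, g ‖x‖ ^ 2 = 5 • v • ∫ y in Ioi 0, y ^ (5-1) • g y ^ 2
  have hpolar' : ∫ x : E5, g ‖x‖ ^ 2 = (5 * v) * ∫ s in Ioi (0:ℝ), h s := by
    rw [hpolar]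
    simp only [nsmul_eq_mul, smul_eq_mul, Nat.cast_ofNat]
    rw [measureReal_def, ← hv, mul_assoc]
  -- compare the 5D integrals
  have hsupp : HasCompactSupport (fun x : E5 => g ‖x‖ ^ 2) := by
    apply HasCompactSupport.intro (isCompact_closedBall (0:E5) T)
    intro x hx
    have : T ≤ ‖x‖ := by
      simp only [mem_closedBall, dist_zero_right, not_le] at hx
      exact hx.le
    simp [hvan _ this]
  have hcont : Continuous (fun x : E5 => g ‖x‖ ^ 2) := by fun_prop
  have hGsupp : HasCompactSupport (fun x : E5 => G x ^ 2) := by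
    have : (fun x : E5 => G x ^ 2) = (fun t : ℝ => t ^ 2) ∘ G := rfl
    rw [this]
    exact hGc.comp_left (by norm_num)
  have hmono : ∫ x : E5, g ‖x‖ ^ 2 ≤ ∫ x : E5, G x ^ 2 := by
    apply integral_mono (hcont.integrable_of_hasCompactSupport hsupp)
      ((by fun_prop : Continuous (fun x : E5 => G x ^ 2)).integrable_of_hasCompactSupport hGsupp)
    intro x
    have := hcomp x
    calc g ‖x‖ ^ 2 = |g ‖x‖| ^ 2 := (sq_abs _).symm
      _ ≤ |G x| ^ 2 := pow_le_pow_left₀ (abs_nonneg _) this 2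
      _ = G x ^ 2 := sq_abs _
  rw [hIoc]
  rw [le_inv_mul_iff₀ h5v, ← hpolar']
  exact hmono
lemma strauss_1d {W : ℝ → ℝ} (hWc : Continuous W) (hW1c : Continuous (deriv W))
    (hd : ∀ r, HasDerivAt W (deriv W r) r) {T r : ℝ} (hr : 0 ≤ r) (hrT : r ≤ T)
    (hWT : W T = 0) :
    W r ^ 2 * r ^ 4 ≤ ∫ s in (0:ℝ)..T, (W s ^ 2 + deriv W s ^ 2) * s ^ 4 := by
  set W1 := deriv W with hW1
  set φ' : ℝ → ℝ := fun s => (2:ℕ) * W s ^ 1 * W1 s * s ^ 4 + W s ^ 2 * ((4:ℕ) * s ^ 3) with hφ'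
  have hφ : ∀ s, HasDerivAt (fun t => W t ^ 2 * t ^ 4) (φ' s) s := by
    intro s
    exact ((hd s).pow 2).mul (hasDerivAt_pow 4 s)
  have hφ'c : Continuous φ' := by fun_prop
  have hFTC : ∫ s in r..T, φ' s = W T ^ 2 * T ^ 4 - W r ^ 2 * r ^ 4 :=
    integral_eq_sub_of_hasDerivAt (fun s _ => hφ s) (hφ'c.intervalIntegrable r T)
  have h1 : W r ^ 2 * r ^ 4 = ∫ s in r..T, -φ' s := by
    rw [intervalIntegral.integral_neg, hFTC, hWT]
    ring
  rw [h1]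
  have h2 : ∫ s in r..T, -φ' s ≤ ∫ s in r..T, (W s ^ 2 + W1 s ^ 2) * s ^ 4 := by
    apply integral_mono_on hrT (hφ'c.neg.intervalIntegrable r T)
      ((by fun_prop : Continuous fun s => (W s ^ 2 + W1 s ^ 2) * s ^ 4).intervalIntegrable r T)
    intro s hs
    have hs0 : 0 ≤ s := hr.trans hs.1
    have h3 : 0 ≤ (W s + W1 s) ^ 2 * s ^ 4 := by positivity
    have h4 : 0 ≤ W s ^ 2 * s ^ 3 := by positivity
    simp only [hφ', Pi.neg_apply]
    push_cast
    nlinarith [h3, h4]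
  refine h2.trans (integral_mono_interval hr hrT le_rfl ?_
    ((by fun_prop : Continuous fun s => (W s ^ 2 + W1 s ^ 2) * s ^ 4).intervalIntegrable 0 T))
  filter_upwards with s
  positivity

lemma hardy_1d {W1 : ℝ → ℝ} (hW1c : Continuous W1) (hW2c : Continuous (deriv W1))
    (hd : ∀ r, HasDerivAt W1 (deriv W1 r) r) {T : ℝ} (hT : 0 ≤ T) (hW1T : W1 T = 0) :
    ∫ s in (0:ℝ)..T, W1 s ^ 2 * s ^ 2 ≤
      (4/9) * ∫ s in (0:ℝ)..T, deriv W1 s ^ 2 * s ^ 4 := by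
  set W2 := deriv W1 with hW2
  set X : ℝ := ∫ s in (0:ℝ)..T, W1 s ^ 2 * s ^ 2 with hX
  set Y : ℝ := ∫ s in (0:ℝ)..T, W2 s ^ 2 * s ^ 4 with hY
  have hXnn : 0 ≤ X := intervalIntegral.integral_nonneg hT (fun s _ => by positivity)
  have hYnn : 0 ≤ Y := intervalIntegral.integral_nonneg hT (fun s _ => by positivity)
  set ψ' : ℝ → ℝ := fun s => (2:ℕ) * W1 s ^ 1 * W2 s * s ^ 3 + W1 s ^ 2 * ((3:ℕ) * s ^ 2)
    with hψ'
  have hψ : ∀ s, HasDerivAt (fun t => W1 t ^ 2 * t ^ 3) (ψ' s) s := by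
    intro s
    exact ((hd s).pow 2).mul (hasDerivAt_pow 3 s)
  have hψ'c : Continuous ψ' := by fun_prop
  have hFTC : ∫ s in (0:ℝ)..T, ψ' s = 0 := by
    rw [integral_eq_sub_of_hasDerivAt (fun s _ => hψ s) (hψ'c.intervalIntegrable 0 T), hW1T]
    ring
  have hsplit : ∫ s in (0:ℝ)..T, ψ' s =
      (∫ s in (0:ℝ)..T, (2:ℝ) * W1 s * W2 s * s ^ 3) + 3 * X := by
    rw [hX, ← intervalIntegral.integral_const_mul, ← intervalIntegral.integral_add
      ((by fun_prop : Continuous fun s => (2:ℝ) * W1 s * W2 s * s ^ 3).intervalIntegrable 0 T)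
      ((by fun_prop : Continuous fun s => (3:ℝ) * (W1 s ^ 2 * s ^ 2)).intervalIntegrable 0 T)]
    apply intervalIntegral.integral_congr
    intro s _
    simp only [hψ']
    push_cast
    ring
  have h3X : 3 * X = ∫ s in (0:ℝ)..T, -((2:ℝ) * W1 s * W2 s * s ^ 3) := by
    rw [intervalIntegral.integral_neg]
    have := hFTC
    rw [hsplit] at this
    linarith
  -- Cauchy–Schwarz
  have hCS := cs_interval (f := fun s => |W1 s * s|) (g := fun s => |W2 s * s ^ 2|)
    (hW1c.mul continuous_id).abs (hW2c.mul (continuous_pow 2)).abs hT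
  have hfX : (∫ s in (0:ℝ)..T, |W1 s * s| ^ 2) = X := by
    rw [hX]
    apply intervalIntegral.integral_congr
    intro s _
    dsimp only
    rw [sq_abs, mul_pow]
  have hgY : (∫ s in (0:ℝ)..T, |W2 s * s ^ 2| ^ 2) = Y := by
    rw [hY]
    apply intervalIntegral.integral_congr
    intro s _
    dsimp only
    rw [sq_abs, mul_pow, ← pow_mul]
  beta_reduce at hCS
  rw [hfX, hgY] at hCS
  have hmono : ∫ s in (0:ℝ)..T, -((2:ℝ) * W1 s * W2 s * s ^ 3) ≤
      ∫ s in (0:ℝ)..T, 2 * (|W1 s * s| * |W2 s * s ^ 2|) := by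
    apply integral_mono_on hT
      ((by fun_prop : Continuous fun s => -((2:ℝ) * W1 s * W2 s * s ^ 3)).intervalIntegrable 0 T)
      ((by fun_prop : Continuous fun s => (2:ℝ) * (|W1 s * s| * |W2 s * s ^ 2|)).intervalIntegrable 0 T)
    intro s _
    rw [← abs_mul]
    have h1 : W1 s * s * (W2 s * s ^ 2) = W1 s * W2 s * s ^ 3 := by ring
    rw [h1]
    nlinarith [neg_abs_le (W1 s * W2 s * s ^ 3), abs_nonneg (W1 s * W2 s * s ^ 3)]
  have h2 : (∫ s in (0:ℝ)..T, 2 * (|W1 s * s| * |W2 s * s ^ 2|)) =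
      2 * ∫ s in (0:ℝ)..T, |W1 s * s| * |W2 s * s ^ 2| :=
    intervalIntegral.integral_const_mul _ _
  have hkey : 3 * X ≤ 2 * (Real.sqrt X * Real.sqrt Y) := by
    rw [h3X]
    calc ∫ s in (0:ℝ)..T, -((2:ℝ) * W1 s * W2 s * s ^ 3)
        ≤ 2 * ∫ s in (0:ℝ)..T, |W1 s * s| * |W2 s * s ^ 2| := h2 ▸ hmono
      _ ≤ 2 * (Real.sqrt X * Real.sqrt Y) := by
          apply mul_le_mul_of_nonneg_left hCS (by norm_num)
  nlinarith [hkey, Real.sq_sqrt hXnn, Real.sq_sqrt hYnn, Real.sqrt_nonneg X,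
    Real.sqrt_nonneg Y, sq_nonneg (3 * Real.sqrt X - 2 * Real.sqrt Y)]
lemma sqrt_add_le' {a b : ℝ} (ha : 0 ≤ a) (hb : 0 ≤ b) :
    Real.sqrt (a + b) ≤ Real.sqrt a + Real.sqrt b := by
  have h : a + b ≤ (Real.sqrt a + Real.sqrt b) ^ 2 := by
    nlinarith [Real.sq_sqrt ha, Real.sq_sqrt hb, Real.sqrt_nonneg a, Real.sqrt_nonneg b,
      mul_nonneg (Real.sqrt_nonneg a) (Real.sqrt_nonneg b)]
  calc Real.sqrt (a + b) ≤ Real.sqrt ((Real.sqrt a + Real.sqrt b) ^ 2) := Real.sqrt_le_sqrt h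
    _ = Real.sqrt a + Real.sqrt b := Real.sqrt_sq (by positivity)
set_option maxHeartbeats 1000000 in
/-- Pointwise decay for radial `H²` functions in five dimensions (eq-radGh-3):
`sup_x |x|^{1/2} ⟨x⟩^{3/2} |u(x)| ≲ Σ_{|a|≤2} ‖∇^a u‖_{L²(ℝ⁵)}`. -/
theorem radial_pointwise_decay_dim5 :
    ∃ C : ℝ≥0, 0 < C ∧
      ∀ u : EuclideanSpace ℝ (Fin 5) → ℝ,
        ContDiff ℝ (⊤ : ℕ∞) u → HasCompactSupport u →
        (∃ w : ℝ → ℝ, ∀ x, u x = w ‖x‖) →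
        ∀ x : EuclideanSpace ℝ (Fin 5),
          ENNReal.ofReal (‖x‖ ^ ((1 : ℝ)/2) * Real.sqrt (1 + ‖x‖ ^ 2) ^ ((3 : ℝ)/2)) *
              (‖u x‖₊ : ℝ≥0∞) ≤
            C * ∑ j ∈ Finset.range 3,
              eLpNorm (fun x => ‖iteratedFDeriv ℝ j u x‖) 2 volume := by
  classical
  set v : ℝ := (volume (ball (0:E5) 1)).toReal with hv
  have hvpos : 0 < v := ENNReal.toReal_pos (measure_ball_pos volume 0 one_pos).ne'
    measure_ball_lt_top.ne
  set c : ℝ := 5 * v with hc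
  have hcpos : 0 < c := by positivity
  set K : ℝ := 2 / Real.sqrt c with hK
  have hKpos : 0 < K := by positivity
  refine ⟨K.toNNReal + 1, lt_of_lt_of_le zero_lt_one le_add_self, ?_⟩
  intro u hu hcs hrad x
  obtain ⟨W, hWc, hW1c, hW2c, hdW, hdW1, hWeq, hb1, hb2⟩ := dir_facts hu hrad
  -- support radius
  obtain ⟨R, hR⟩ := hcs.isBounded.subset_ball (0 : E5)
  set T : ℝ := max R 0 + 1 with hTdef
  have hT1 : (1:ℝ) ≤ T := le_add_of_nonneg_left (le_max_right R 0)
  have hTpos : (0:ℝ) < T := lt_of_lt_of_le one_pos hT1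
  have hMT : max R 0 < T := lt_add_one _
  have huvan : ∀ y : E5, R ≤ ‖y‖ → u y = 0 := by
    intro y hy
    by_contra h
    have hy2 := hR (subset_tsupport u (by simpa [Function.mem_support] using h))
    rw [mem_ball, dist_zero_right] at hy2
    linarith only [hy, hy2]
  have hWvan : ∀ s : ℝ, max R 0 < s → W s = 0 := by
    intro s hs
    have hs0 : 0 ≤ s := le_of_lt (lt_of_le_of_lt (le_max_right R 0) hs)
    have h1 : W s = u (EuclideanSpace.single (0 : Fin 5) s) := by
      rw [hWeq, EuclideanSpace.norm_single, Real.norm_eq_abs, abs_of_nonneg hs0]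
    rw [h1]
    exact huvan _ (by rw [EuclideanSpace.norm_single, Real.norm_eq_abs, abs_of_nonneg hs0]
                      exact le_of_lt (lt_of_le_of_lt (le_max_left R 0) hs))
  have hW1van : ∀ s : ℝ, max R 0 < s → deriv W s = 0 := by
    intro s hs
    have heq : W =ᶠ[nhds s] (fun _ => (0:ℝ)) :=
      Filter.eventuallyEq_of_mem (Ioi_mem_nhds hs) (fun t ht => hWvan t ht)
    rw [heq.deriv_eq, deriv_const]
  have hWT : W T = 0 := hWvan T hMT
  have hW1T : deriv W T = 0 := hW1van T hMT
  -- L² quantities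
  set F0 : E5 → ℝ := fun y => ‖iteratedFDeriv ℝ 0 u y‖ with hF0
  set F1 : E5 → ℝ := fun y => ‖iteratedFDeriv ℝ 1 u y‖ with hF1
  set F2 : E5 → ℝ := fun y => ‖iteratedFDeriv ℝ 2 u y‖ with hF2
  have hF0c : Continuous F0 := (hu.continuous_iteratedFDeriv (by simp)).norm
  have hF1c : Continuous F1 := (hu.continuous_iteratedFDeriv (by simp)).norm
  have hF2c : Continuous F2 := (hu.continuous_iteratedFDeriv (by exact WithTop.coe_le_coe.mpr (le_top : (2:ℕ∞) ≤ ⊤))).norm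
  have hF0s : HasCompactSupport F0 := (hcs.iteratedFDeriv 0).norm
  have hF1s : HasCompactSupport F1 := (hcs.iteratedFDeriv 1).norm
  have hF2s : HasCompactSupport F2 := (hcs.iteratedFDeriv 2).norm
  set S0 : ℝ := ∫ y : E5, F0 y ^ 2 with hS0
  set S1 : ℝ := ∫ y : E5, F1 y ^ 2 with hS1
  set S2 : ℝ := ∫ y : E5, F2 y ^ 2 with hS2
  have hS0nn : 0 ≤ S0 := integral_nonneg fun y => sq_nonneg _
  have hS1nn : 0 ≤ S1 := integral_nonneg fun y => sq_nonneg _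
  have hS2nn : 0 ≤ S2 := integral_nonneg fun y => sq_nonneg _
  set N0 : ℝ := Real.sqrt S0 with hN0
  set N1 : ℝ := Real.sqrt S1 with hN1
  set N2 : ℝ := Real.sqrt S2 with hN2
  -- polar comparisons
  have hvanT : ∀ s : ℝ, T ≤ s → W s = 0 := fun s hs => hWvan s (lt_of_lt_of_le hMT hs)
  have hvanT1 : ∀ s : ℝ, T ≤ s → deriv W s = 0 := fun s hs => hW1van s (lt_of_lt_of_le hMT hs)
  have hvanT2 : ∀ s : ℝ, T ≤ s → deriv (deriv W) s = 0 := by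
    intro s hs
    have heq : deriv W =ᶠ[nhds s] (fun _ => (0:ℝ)) :=
      Filter.eventuallyEq_of_mem (Ioi_mem_nhds (lt_of_lt_of_le hMT hs))
        (fun t ht => hW1van t ht)
    rw [heq.deriv_eq, deriv_const]
  have hpol0 : ∫ s in (0:ℝ)..T, W s ^ 2 * s ^ 4 ≤ c⁻¹ * S0 := by
    refine polar_bound hWc hF0c hF0s hTpos hvanT ?_
    intro y
    rw [← hWeq y, hF0]
    simp [norm_iteratedFDeriv_zero, Real.norm_eq_abs, abs_abs]
  have hpol1 : ∫ s in (0:ℝ)..T, deriv W s ^ 2 * s ^ 4 ≤ c⁻¹ * S1 := by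
    refine polar_bound hW1c hF1c hF1s hTpos hvanT1 ?_
    intro y
    calc |deriv W ‖y‖| ≤ ‖iteratedFDeriv ℝ 1 u y‖ := hb1 y
      _ = |F1 y| := (abs_of_nonneg (norm_nonneg _)).symm
  have hpol2 : ∫ s in (0:ℝ)..T, deriv (deriv W) s ^ 2 * s ^ 4 ≤ c⁻¹ * S2 := by
    refine polar_bound hW2c hF2c hF2s hTpos hvanT2 ?_
    intro y
    calc |deriv (deriv W) ‖y‖| ≤ ‖iteratedFDeriv ℝ 2 u y‖ := hb2 y
      _ = |F2 y| := (abs_of_nonneg (norm_nonneg _)).symm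
  -- A2 and Y
  set A2 : ℝ := ∫ s in (0:ℝ)..T, (W s ^ 2 + deriv W s ^ 2) * s ^ 4 with hA2def
  have hA2split : A2 = (∫ s in (0:ℝ)..T, W s ^ 2 * s ^ 4)
      + ∫ s in (0:ℝ)..T, deriv W s ^ 2 * s ^ 4 := by
    rw [hA2def, ← intervalIntegral.integral_add
      ((by fun_prop : Continuous fun s : ℝ => W s ^ 2 * s ^ 4).intervalIntegrable 0 T)
      ((by fun_prop : Continuous fun s : ℝ => deriv W s ^ 2 * s ^ 4).intervalIntegrable 0 T)]
    apply intervalIntegral.integral_congr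
    intro s _
    ring
  have hA2le : A2 ≤ c⁻¹ * S0 + c⁻¹ * S1 := by
    rw [hA2split]; exact add_le_add hpol0 hpol1
  have hA2nn : 0 ≤ A2 :=
    intervalIntegral.integral_nonneg hTpos.le (fun s _ => by positivity)
  set Y : ℝ := ∫ s in (0:ℝ)..T, deriv (deriv W) s ^ 2 * s ^ 4 with hYdef
  have hYnn : 0 ≤ Y :=
    intervalIntegral.integral_nonneg hTpos.le (fun s _ => by positivity)
  set B : ℝ := Real.sqrt A2 with hB
  set D : ℝ := Real.sqrt Y with hD
  have hBnn : 0 ≤ B := Real.sqrt_nonneg _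
  have hDnn : 0 ≤ D := Real.sqrt_nonneg _
  -- Strauss bound
  have hstr : ∀ ρ : ℝ, 0 ≤ ρ → ρ ≤ T → |W ρ| * ρ ^ 2 ≤ B := by
    intro ρ h0 hρT
    have h1 := strauss_1d hWc hW1c hdW h0 hρT hWT
    have h2 : (|W ρ| * ρ ^ 2) ^ 2 = W ρ ^ 2 * ρ ^ 4 := by
      rw [mul_pow, sq_abs]; ring
    calc |W ρ| * ρ ^ 2 = Real.sqrt ((|W ρ| * ρ ^ 2) ^ 2) :=
          (Real.sqrt_sq (by positivity)).symm
      _ ≤ B := by rw [h2]; exact Real.sqrt_le_sqrt h1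
  -- Hardy bound
  have hhar : ∫ s in (0:ℝ)..T, deriv W s ^ 2 * s ^ 2 ≤ (4/9) * Y :=
    hardy_1d hW1c hW2c hdW1 hTpos.le hW1T
  -- main pointwise bound
  set r : ℝ := ‖x‖ with hr
  have hrnn : 0 ≤ r := norm_nonneg x
  set m : ℝ := r ^ ((1:ℝ)/2) * Real.sqrt (1 + r ^ 2) ^ ((3:ℝ)/2) with hm
  have hmnn : 0 ≤ m := by
    apply mul_nonneg (Real.rpow_nonneg hrnn _) (Real.rpow_nonneg (Real.sqrt_nonneg _) _)
  have hmain : m * |u x| ≤ 2 * B + 2 * D := by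
    rw [hWeq x, ← hr]
    rcases eq_or_lt_of_le hrnn with h0 | hrpos
    · have : m = 0 := by
        rw [hm, ← h0, Real.zero_rpow (by norm_num : (1:ℝ)/2 ≠ 0), zero_mul]
      rw [this, zero_mul]
      positivity
    rcases le_or_gt r 1 with hr1 | hr1
    · -- small r
      have hsq2 : Real.sqrt (1 + r ^ 2) ^ ((3:ℝ)/2) ≤ 2 := by
        have hr2 : r ^ 2 ≤ 1 := pow_le_one₀ hrnn hr1
        have ha : Real.sqrt (1 + r ^ 2) ≤ Real.sqrt 2 :=
          Real.sqrt_le_sqrt (by linarith only [hr2])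
        have hb' : Real.sqrt (1 + r ^ 2) ^ ((3:ℝ)/2) ≤ Real.sqrt 2 ^ ((3:ℝ)/2) :=
          Real.rpow_le_rpow (Real.sqrt_nonneg _) ha (by norm_num)
        have hc2 : Real.sqrt 2 ^ ((3:ℝ)/2) = 2 ^ ((3:ℝ)/4) := by
          rw [Real.sqrt_eq_rpow, ← Real.rpow_mul (by norm_num : (0:ℝ) ≤ 2)]
          norm_num
        have hd2 : (2:ℝ) ^ ((3:ℝ)/4) ≤ 2 := by
          calc (2:ℝ) ^ ((3:ℝ)/4) ≤ 2 ^ (1:ℝ) :=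
              Real.rpow_le_rpow_of_exponent_le (by norm_num) (by norm_num)
            _ = 2 := Real.rpow_one 2
        rw [hc2] at hb'
        linarith only [hb', hd2]
      have hm1 : m ≤ 2 * Real.sqrt r := by
        rw [hm, ← Real.sqrt_eq_rpow]
        calc Real.sqrt r * Real.sqrt (1 + r ^ 2) ^ ((3:ℝ)/2)
            ≤ Real.sqrt r * 2 := mul_le_mul_of_nonneg_left hsq2 (Real.sqrt_nonneg r)
          _ = 2 * Real.sqrt r := mul_comm _ _
      -- FTC on [r,1]
      have hFTC : W 1 - W r = ∫ s in r..1, deriv W s :=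
        (intervalIntegral.integral_eq_sub_of_hasDerivAt (fun s _ => hdW s)
          (hW1c.intervalIntegrable r 1)).symm
      have habs : |W r| ≤ |W 1| + ∫ s in r..1, |deriv W s| := by
        have h1 : |W r| ≤ |W 1| + |W 1 - W r| := by
          have heq0 : W r = W 1 + (W r - W 1) := by ring
          calc |W r| = |W 1 + (W r - W 1)| := by rw [← heq0]
            _ ≤ |W 1| + |W r - W 1| := abs_add_le _ _
            _ = |W 1| + |W 1 - W r| := by rw [abs_sub_comm]
        have h2 : |W 1 - W r| ≤ ∫ s in r..1, |deriv W s| := by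
          rw [hFTC]
          exact intervalIntegral.abs_integral_le_integral_abs hr1
        linarith only [h1, h2]
      have hW1b : |W 1| ≤ B := by
        have h3 := hstr 1 zero_le_one hT1
        simpa using h3
      -- CS on [r,1]
      set gmax : ℝ → ℝ := fun s => (max s r)⁻¹ with hgmax
      have hgc : Continuous gmax := by
        apply Continuous.inv₀ (continuous_id.max continuous_const)
        intro s
        exact ne_of_gt (lt_of_lt_of_le hrpos (le_max_right s r))
      have hfc : Continuous (fun s => |deriv W s * s|) := (hW1c.mul continuous_id).abs
      have hCS := cs_interval hfc hgc hr1
      have huIcc : uIcc r 1 = Icc r 1 := uIcc_of_le hr1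
      have heq1 : ∫ s in r..1, |deriv W s| = ∫ s in r..1, |deriv W s * s| * gmax s := by
        apply intervalIntegral.integral_congr
        intro s hs
        rw [huIcc] at hs
        have hspos : 0 < s := lt_of_lt_of_le hrpos hs.1
        rw [hgmax]
        dsimp only
        rw [max_eq_left hs.1, abs_mul, abs_of_pos hspos, mul_assoc,
          mul_inv_cancel₀ hspos.ne', mul_one]
      have heq2 : (∫ s in r..1, |deriv W s * s| ^ 2) = ∫ s in r..1, deriv W s ^ 2 * s ^ 2 := by
        apply intervalIntegral.integral_congr
        intro s _
        dsimp only
        rw [sq_abs, mul_pow]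
      have hle2 : (∫ s in r..1, deriv W s ^ 2 * s ^ 2) ≤ (4/9) * Y := by
        have hnn : 0 ≤ᵐ[volume.restrict (Ioc (0:ℝ) T)] fun s => deriv W s ^ 2 * s ^ 2 :=
          Filter.Eventually.of_forall (fun s => by positivity)
        have hint : IntervalIntegrable (fun s : ℝ => deriv W s ^ 2 * s ^ 2) volume 0 T :=
          ((hW1c.pow 2).mul (continuous_pow 2)).intervalIntegrable 0 T
        exact (intervalIntegral.integral_mono_interval hrnn hr1 hT1 hnn hint).trans hhar
      have heq3 : (∫ s in r..1, gmax s ^ 2) ≤ 1/r := by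
        have he : (∫ s in r..1, gmax s ^ 2) = ∫ s in r..1, (s^2)⁻¹ := by
          apply intervalIntegral.integral_congr
          intro s hs
          rw [huIcc] at hs
          rw [hgmax]
          dsimp only
          rw [max_eq_left hs.1, inv_pow]
        have hFTC2 : (∫ s in r..1, (s^2)⁻¹) = -(1:ℝ)⁻¹ - -r⁻¹ := by
          apply intervalIntegral.integral_eq_sub_of_hasDerivAt
            (f := fun s => -s⁻¹)
          · intro s hs
            rw [huIcc] at hs
            have hs0 : s ≠ 0 := (lt_of_lt_of_le hrpos hs.1).ne'
            simpa [Pi.neg_def] using (hasDerivAt_inv hs0).neg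
          · apply ContinuousOn.intervalIntegrable
            apply ContinuousOn.inv₀ (continuousOn_pow 2)
            intro s hs
            rw [huIcc] at hs
            exact pow_ne_zero 2 (lt_of_lt_of_le hrpos hs.1).ne'
        rw [he, hFTC2]
        rw [inv_one]
        have h0r : 0 < r⁻¹ := by positivity
        rw [one_div]
        linarith only [h0r]
      -- combine CS
      have h4 : Real.sqrt (∫ s in r..1, |deriv W s * s| ^ 2) ≤ (2/3) * D := by
        rw [heq2]
        refine (Real.sqrt_le_sqrt hle2).trans ?_
        rw [show (4:ℝ)/9 * Y = ((2:ℝ)/3)^2 * Y from by ring,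
          Real.sqrt_mul (by positivity) Y, Real.sqrt_sq (by norm_num : (0:ℝ) ≤ 2/3)]
      have h5 : Real.sqrt (∫ s in r..1, gmax s ^ 2) ≤ Real.sqrt (1/r) :=
        Real.sqrt_le_sqrt heq3
      have hintle : (∫ s in r..1, |deriv W s|) ≤ (2/3) * D * Real.sqrt (1/r) := by
        rw [heq1]
        refine hCS.trans ?_
        exact mul_le_mul h4 h5 (Real.sqrt_nonneg _) (by positivity)
      have h6 : |W r| ≤ B + (2/3) * D * Real.sqrt (1/r) :=
        habs.trans (add_le_add hW1b hintle)
      have h7 : m * |W r| ≤ (2 * Real.sqrt r) * (B + (2/3) * D * Real.sqrt (1/r)) :=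
        mul_le_mul hm1 h6 (abs_nonneg _) (by positivity)
      have h8 : Real.sqrt r * Real.sqrt (1/r) = 1 := by
        rw [← Real.sqrt_mul hrnn, mul_one_div, div_self hrpos.ne', Real.sqrt_one]
      have h9 : Real.sqrt r ≤ 1 := by
        rw [show (1:ℝ) = Real.sqrt 1 from Real.sqrt_one.symm]
        exact Real.sqrt_le_sqrt hr1
      refine h7.trans ?_
      have e1 : (2 * Real.sqrt r) * (B + (2/3) * D * Real.sqrt (1/r))
          = 2 * (Real.sqrt r * B) + (4/3) * D * (Real.sqrt r * Real.sqrt (1/r)) := by ring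
      rw [e1, h8, mul_one]
      have e2 : Real.sqrt r * B ≤ 1 * B := mul_le_mul_of_nonneg_right h9 hBnn
      rw [one_mul] at e2
      have t1 : 2 * (Real.sqrt r * B) ≤ 2 * B := by
        have := mul_le_mul_of_nonneg_left e2 (by norm_num : (0:ℝ) ≤ 2)
        linarith only [this]
      have t2 : (4/3 : ℝ) * D ≤ 2 * D :=
        mul_le_mul_of_nonneg_right (by norm_num : (4/3:ℝ) ≤ 2) hDnn
      exact add_le_add t1 t2
    · -- large r
      rcases le_or_gt r T with hrT | hrT
      · have hbd := hstr r hrnn hrT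
        have hm2 : m ≤ 2 * r ^ 2 := by
          have ha : Real.sqrt (1 + r ^ 2) ≤ Real.sqrt 2 * r := by
            rw [← Real.sqrt_sq hrnn, ← Real.sqrt_mul (by norm_num : (0:ℝ) ≤ 2)]
            have h1r : (1:ℝ) ≤ r ^ 2 := one_le_pow₀ hr1.le
            have hss : Real.sqrt (r ^ 2) ^ 2 = r ^ 2 := Real.sq_sqrt (sq_nonneg r)
            exact Real.sqrt_le_sqrt (by linarith only [h1r, hss])
          have hb' : Real.sqrt (1 + r ^ 2) ^ ((3:ℝ)/2) ≤ (Real.sqrt 2 * r) ^ ((3:ℝ)/2) :=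
            Real.rpow_le_rpow (Real.sqrt_nonneg _) ha (by norm_num)
          have hc2 : (Real.sqrt 2 * r) ^ ((3:ℝ)/2) =
              Real.sqrt 2 ^ ((3:ℝ)/2) * r ^ ((3:ℝ)/2) :=
            Real.mul_rpow (Real.sqrt_nonneg 2) hrnn
          have hd2 : Real.sqrt 2 ^ ((3:ℝ)/2) ≤ 2 := by
            rw [Real.sqrt_eq_rpow, ← Real.rpow_mul (by norm_num : (0:ℝ) ≤ 2)]
            calc (2:ℝ) ^ ((1:ℝ)/2 * (3/2)) ≤ 2 ^ (1:ℝ) :=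
                Real.rpow_le_rpow_of_exponent_le (by norm_num) (by norm_num)
              _ = 2 := Real.rpow_one 2
          have hr32 : (0:ℝ) ≤ r ^ ((3:ℝ)/2) := Real.rpow_nonneg hrnn _
          have h5 : Real.sqrt (1 + r ^ 2) ^ ((3:ℝ)/2) ≤ 2 * r ^ ((3:ℝ)/2) := by
            rw [hc2] at hb'
            exact hb'.trans (mul_le_mul_of_nonneg_right hd2 hr32)
          calc m ≤ r ^ ((1:ℝ)/2) * (2 * r ^ ((3:ℝ)/2)) := by
                rw [hm]
                exact mul_le_mul_of_nonneg_left h5 (Real.rpow_nonneg hrnn _)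
            _ = 2 * (r ^ ((1:ℝ)/2) * r ^ ((3:ℝ)/2)) := by ring
            _ = 2 * r ^ 2 := by
                rw [← Real.rpow_add hrpos]
                norm_num
        calc m * |W r| ≤ 2 * r ^ 2 * |W r| :=
              mul_le_mul_of_nonneg_right hm2 (abs_nonneg _)
          _ = 2 * (|W r| * r ^ 2) := by ring
          _ ≤ 2 * B := by linarith only [hbd]
          _ ≤ 2 * B + 2 * D := by linarith only [hDnn]
      · have hWr : W r = 0 := hWvan r (lt_trans hMT hrT)
        rw [hWr, abs_zero, mul_zero]
        positivity
  -- convert to the ENNReal statement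
  have hN0nn : 0 ≤ N0 := Real.sqrt_nonneg _
  have hN1nn : 0 ≤ N1 := Real.sqrt_nonneg _
  have hN2nn : 0 ≤ N2 := Real.sqrt_nonneg _
  have hqnn : (0:ℝ) ≤ (Real.sqrt c)⁻¹ := by positivity
  have hBle : B ≤ (Real.sqrt c)⁻¹ * (N0 + N1) := by
    calc B ≤ Real.sqrt (c⁻¹ * S0 + c⁻¹ * S1) := Real.sqrt_le_sqrt hA2le
      _ ≤ Real.sqrt (c⁻¹ * S0) + Real.sqrt (c⁻¹ * S1) :=
          sqrt_add_le' (by positivity) (by positivity)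
      _ = (Real.sqrt c)⁻¹ * (N0 + N1) := by
          rw [Real.sqrt_mul (by positivity) S0, Real.sqrt_mul (by positivity) S1,
            Real.sqrt_inv, hN0, hN1]
          ring
  have hDle : D ≤ (Real.sqrt c)⁻¹ * N2 := by
    calc D ≤ Real.sqrt (c⁻¹ * S2) := Real.sqrt_le_sqrt hpol2
      _ = (Real.sqrt c)⁻¹ * N2 := by
          rw [Real.sqrt_mul (by positivity) S2, Real.sqrt_inv, hN2]
  have hfinal : m * |u x| ≤ K * (N0 + N1 + N2) := by
    have hKq : K = 2 * (Real.sqrt c)⁻¹ := by rw [hK]; ring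
    rw [hKq]
    calc m * |u x| ≤ 2 * B + 2 * D := hmain
      _ ≤ 2 * ((Real.sqrt c)⁻¹ * (N0 + N1)) + 2 * ((Real.sqrt c)⁻¹ * N2) :=
          add_le_add (mul_le_mul_of_nonneg_left hBle (by norm_num))
            (mul_le_mul_of_nonneg_left hDle (by norm_num))
      _ = 2 * (Real.sqrt c)⁻¹ * (N0 + N1 + N2) := by ring
  have help : ∀ j : ℕ, eLpNorm (fun y : E5 => ‖iteratedFDeriv ℝ j u y‖) 2 volume
      = ENNReal.ofReal (Real.sqrt (∫ y : E5, ‖iteratedFDeriv ℝ j u y‖ ^ 2)) := by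
    intro j
    have hmem : MemLp (fun y : E5 => ‖iteratedFDeriv ℝ j u y‖) 2 volume :=
      ((hu.continuous_iteratedFDeriv (by exact_mod_cast le_top)).norm).memLp_of_hasCompactSupport
        ((hcs.iteratedFDeriv j).norm)
    rw [hmem.eLpNorm_eq_integral_rpow_norm two_ne_zero ENNReal.ofNat_ne_top]
    congr 1
    have h_in : (∫ y : E5, ‖(fun y : E5 => ‖iteratedFDeriv ℝ j u y‖) y‖ ^ (2:ℝ≥0∞).toReal)
        = ∫ y : E5, ‖iteratedFDeriv ℝ j u y‖ ^ 2 := by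
      apply MeasureTheory.integral_congr_ae
      filter_upwards with y
      rw [Real.norm_eq_abs, abs_of_nonneg (norm_nonneg _)]
      rw [show ((2:ℝ≥0∞).toReal) = ((2:ℕ):ℝ) from by simp, Real.rpow_natCast]
    rw [h_in, Real.sqrt_eq_rpow]
    norm_num
  have hsum : (∑ j ∈ Finset.range 3,
        eLpNorm (fun y : E5 => ‖iteratedFDeriv ℝ j u y‖) 2 volume)
      = ENNReal.ofReal N0 + ENNReal.ofReal N1 + ENNReal.ofReal N2 := by
    rw [Finset.sum_range_succ, Finset.sum_range_succ, Finset.sum_range_one,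
      help 0, help 1, help 2]
  have hlhs : ENNReal.ofReal m * (‖u x‖₊ : ℝ≥0∞) = ENNReal.ofReal (m * |u x|) := by
    rw [ENNReal.ofReal_mul hmnn]
    congr 1
    rw [← Real.norm_eq_abs, ofReal_norm, enorm_eq_nnnorm]
  have hofK : ENNReal.ofReal K ≤ ((K.toNNReal + 1 : ℝ≥0) : ℝ≥0∞) := by
    rw [show ENNReal.ofReal K = ((K.toNNReal : ℝ≥0) : ℝ≥0∞) from rfl]
    exact_mod_cast le_self_add
  rw [hsum]
  calc ENNReal.ofReal m * (‖u x‖₊ : ℝ≥0∞)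
      = ENNReal.ofReal (m * |u x|) := hlhs
    _ ≤ ENNReal.ofReal (K * (N0 + N1 + N2)) := ENNReal.ofReal_le_ofReal hfinal
    _ = ENNReal.ofReal K * (ENNReal.ofReal N0 + ENNReal.ofReal N1 + ENNReal.ofReal N2) := by
        rw [ENNReal.ofReal_mul hKpos.le, ENNReal.ofReal_add (by positivity) hN2nn,
          ENNReal.ofReal_add hN0nn hN1nn]
    _ ≤ ((K.toNNReal + 1 : ℝ≥0) : ℝ≥0∞) *
        (ENNReal.ofReal N0 + ENNReal.ofReal N1 + ENNReal.ofReal N2) :=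
        mul_le_mul_left hofK _
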